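/- Let K be an algebraically closed field equipped with a real-valued valuation v, with valuation ring O_v, maximal ideal 𝔪_v and residue field Δ. Let I ⊆ K[x_0,…,x_n] be a homogeneous ideal, and let Ī ⊆ Δ[x_0,…,x_n] be the image, under coefficientwise reduction O_v[x_0,…,x_n] → Δ[x_0,…,x_n], of the set of polynomials in I all of whose coefficients lie in O_v. Then Ī is a homogeneous ideal of Δ[x_0,…,x_n] and, for every degree d, dim_Δ(Ī_d) = dim_K(I_d); in particular Ī has the same Hilbert function as I. -/

import Mathlib

open MvPolynomial

/-- `v : K → ℝ` is a real-valued valuation on the field `K`.  This encodes the usual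
notion of a map `v : K → ℝ ∪ {∞}` with `v x = ∞ ↔ x = 0`, `v (x*y) = v x + v y` and
`v (x+y) ≥ min (v x) (v y)`: the value of `v` at `0` is irrelevant (it "is" `∞`), and
all the axioms involving `0` are automatic. -/
def IsRealValuation {K : Type*} [Field K] (v : K → ℝ) : Prop :=
  (∀ x y : K, x ≠ 0 → y ≠ 0 → v (x * y) = v x + v y) ∧
  (∀ x y : K, x ≠ 0 → y ≠ 0 → x + y ≠ 0 → min (v x) (v y) ≤ v (x + y))

theorem IsRealValuation.v_one {K : Type*} [Field K] {v : K → ℝ}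
    (hv : IsRealValuation v) : v 1 = 0 := by
  have h := hv.1 1 1 one_ne_zero one_ne_zero
  simp only [one_mul] at h
  linarith

theorem IsRealValuation.v_neg {K : Type*} [Field K] {v : K → ℝ}
    (hv : IsRealValuation v) (x : K) (hx : x ≠ 0) : v (-x) = v x := by
  have h1 : v ((-1 : K) * (-1 : K)) = v (-1 : K) + v (-1 : K) :=
    hv.1 (-1) (-1) (by norm_num) (by norm_num)
  have h2 : v (-1 : K) = 0 := by
    rw [neg_one_mul, neg_neg, hv.v_one] at h1; linarith
  have h3 : v ((-1 : K) * x) = v (-1 : K) + v x := hv.1 (-1) x (by norm_num) hx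
  rw [neg_one_mul] at h3
  rw [h3, h2, zero_add]

/-- The valuation ring `O_v = { x | v x ≥ 0 }` (together with `0`). -/
def valuationSubring {K : Type*} [Field K] (v : K → ℝ) (hv : IsRealValuation v) :
    Subring K where
  carrier := { x : K | x = 0 ∨ 0 ≤ v x }
  zero_mem' := Or.inl rfl
  one_mem' := Or.inr (le_of_eq hv.v_one.symm)
  mul_mem' := by
    rintro x y (rfl | hx) hy
    · exact Or.inl (zero_mul _)
    rcases hy with rfl | hy
    · exact Or.inl (mul_zero _)
    by_cases hx0 : x = 0
    · exact Or.inl (by rw [hx0, zero_mul])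
    by_cases hy0 : y = 0
    · exact Or.inl (by rw [hy0, mul_zero])
    · exact Or.inr (by rw [hv.1 x y hx0 hy0]; positivity)
  add_mem' := by
    rintro x y hx hy
    by_cases hxy : x + y = 0
    · exact Or.inl hxy
    rcases hx with rfl | hx
    · rw [zero_add] at hxy ⊢; exact hy
    rcases hy with rfl | hy
    · rw [add_zero] at hxy ⊢; exact Or.inr hx
    by_cases hx0 : x = 0
    · subst hx0; rw [zero_add] at hxy ⊢; exact Or.inr hy
    by_cases hy0 : y = 0
    · subst hy0; rw [add_zero] at hxy ⊢; exact Or.inr hx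
    · exact Or.inr (le_trans (le_min hx hy) (hv.2 x y hx0 hy0 hxy))
  neg_mem' := by
    rintro x (rfl | hx)
    · exact Or.inl neg_zero
    by_cases hx0 : x = 0
    · exact Or.inl (by rw [hx0, neg_zero])
    · exact Or.inr (by rw [hv.v_neg x hx0]; exact hx)

/-- The maximal ideal `𝔪_v = { x | v x > 0 }` (together with `0`) of the valuation
ring. -/
def valuationMaxIdeal {K : Type*} [Field K] (v : K → ℝ) (hv : IsRealValuation v) :
    Ideal (valuationSubring v hv) where
  carrier := { x : valuationSubring v hv | (x : K) = 0 ∨ 0 < v (x : K) }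
  zero_mem' := Or.inl rfl
  add_mem' := by
    rintro a b ha hb
    have ha' : (a : K) = 0 ∨ 0 < v (a : K) := ha
    have hb' : (b : K) = 0 ∨ 0 < v (b : K) := hb
    have hcoe : ((a + b : valuationSubring v hv) : K) = (a : K) + (b : K) := by
      push_cast; ring
    show ((a + b : valuationSubring v hv) : K) = 0 ∨ 0 < v ((a + b : valuationSubring v hv) : K)
    by_cases ha0 : (a : K) = 0
    · rw [hcoe, ha0, zero_add]; exact hb'
    by_cases hb0 : (b : K) = 0
    · rw [hcoe, hb0, add_zero]; exact ha'
    by_cases hab : (a : K) + (b : K) = 0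
    · exact Or.inl (by rw [hcoe]; exact hab)
    refine Or.inr ?_
    rw [hcoe]
    exact lt_of_lt_of_le (lt_min (ha'.resolve_left ha0) (hb'.resolve_left hb0))
      (hv.2 _ _ ha0 hb0 hab)
  smul_mem' := by
    rintro c x hx
    have hx' : (x : K) = 0 ∨ 0 < v (x : K) := hx
    have hcoe : ((c • x : valuationSubring v hv) : K) = (c : K) * (x : K) := rfl
    show ((c • x : valuationSubring v hv) : K) = 0 ∨ 0 < v ((c • x : valuationSubring v hv) : K)
    by_cases hx0 : (x : K) = 0
    · exact Or.inl (by rw [hcoe, hx0, mul_zero])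
    by_cases hc0 : (c : K) = 0
    · exact Or.inl (by rw [hcoe, hc0, zero_mul])
    refine Or.inr ?_
    rw [hcoe, hv.1 _ _ hc0 hx0]
    have hc : (c : K) = 0 ∨ 0 ≤ v (c : K) := c.2
    have := hc.resolve_left hc0
    have := hx'.resolve_left hx0
    linarith

/-- The residue field `Δ = O_v / 𝔪_v`. -/
abbrev residueField {K : Type*} [Field K] (v : K → ℝ) (hv : IsRealValuation v) :=
  valuationSubring v hv ⧸ valuationMaxIdeal v hv

/-- A homogeneous ideal: one containing all homogeneous components of its elements. -/
def IsHomogeneousIdeal {R : Type*} [CommSemiring R] {n : ℕ}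
    (I : Ideal (MvPolynomial (Fin n) R)) : Prop :=
  ∀ f ∈ I, ∀ d : ℕ, MvPolynomial.homogeneousComponent d f ∈ I

/-- `I_d`: the degree-`d` homogeneous component of the ideal `I`, as an `R`-submodule. -/
noncomputable def idealComponent {R : Type*} [CommRing R] {n : ℕ}
    (I : Ideal (MvPolynomial (Fin n) R)) (d : ℕ) : Submodule R (MvPolynomial (Fin n) R) :=
  (homogeneousSubmodule (Fin n) R d) ⊓ (Submodule.restrictScalars R I)

set_option synthInstance.maxHeartbeats 1000000 in
/-- `Ī`: the image in `Δ[x_0,…,x_n]`, under coefficientwise reduction modulo `𝔪_v`, of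
the set of polynomials of `I` all of whose coefficients lie in `O_v`.  (A polynomial of
`K[x_0,…,x_n]` with all coefficients in `O_v` is the same thing as the image of a
polynomial over `O_v` under the coefficientwise inclusion `O_v → K`.) -/
def reducedIdealSet {K : Type*} [Field K] (v : K → ℝ) (hv : IsRealValuation v) {n : ℕ}
    (I : Ideal (MvPolynomial (Fin n) K)) :
    Set (MvPolynomial (Fin n) (residueField v hv)) :=
  (MvPolynomial.map (Ideal.Quotient.mk (valuationMaxIdeal v hv))) ''
    { g : MvPolynomial (Fin n) (valuationSubring v hv) |
      MvPolynomial.map (valuationSubring v hv).subtype g ∈ I }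

/-!
Write `O` for the valuation ring and `π : O → Δ` for the reduction. The set `Ī` is the image
under `π` of the `O`-lattice `I ∩ O[x]`, so it is an ideal, and it is homogeneous because reduction
commutes with taking homogeneous components; in each degree `Ī_d` is likewise the reduction of
the lattice `I_d ∩ O[x]`. Only the fact that `O` is a valuation ring enters the dimension count:
a nonzero finite family in `K` can be rescaled so that all its members lie in `O` and one of them
is `1`. Rescaling a `K`-linear relation among lifts of elements of `Ī_d` thus yields a nontrivial
`Δ`-linear relation among those elements, whence `dim Ī_d ≤ dim I_d`. Conversely, rescaling one
element of `I_d` at a time and passing to the hyperplane where its pivot coefficient vanishes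
gives an echelon family of `dim I_d` lifts whose reductions are independent.
-/

open Module

section Reduction

variable {K : Type*} [Field K] (O : Subring K) {Δ : Type*} [Field Δ] (π : O →+* Δ) {σ : Type*}

theorem Subring.exists_forall_div_mem (hO : ∀ x : K, x ∈ O ∨ x⁻¹ ∈ O) {ι : Type*}
    (s : Finset ι) {c : ι → K} (hcs : ∀ j ∉ s, c j = 0) (hc : c ≠ 0) :
    ∃ i, c i ≠ 0 ∧ ∀ j, c j / c i ∈ O := by
  let A : ValuationSubring K := ⟨O, hO⟩
  obtain ⟨i₀, hi₀⟩ : ∃ i, c i ≠ 0 := Function.ne_iff.mp hc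
  have hi₀s : i₀ ∈ s := by_contra fun h => hi₀ (hcs i₀ h)
  obtain ⟨i, -, hmax⟩ := s.exists_max_image (fun j => A.valuation (c j)) ⟨i₀, hi₀s⟩
  have hci : c i ≠ 0 := fun h => hi₀ <| A.valuation.zero_iff.mp <|
    le_zero_iff.mp (by simpa [h] using hmax i₀ hi₀s)
  refine ⟨i, hci, fun j => ?_⟩
  by_cases hj : j ∈ s
  · refine (A.valuation_le_one_iff _).mp ?_
    rw [map_div₀, div_le_one₀ (zero_lt_iff.mpr ((Valuation.ne_zero_iff _).mpr hci))]
    exact hmax j hj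
  · simp [hcs j hj, O.zero_mem]

theorem MvPolynomial.exists_map_subtype_eq_smul_of_mem_or_inv_mem
    (hO : ∀ x : K, x ∈ O ∨ x⁻¹ ∈ O) {p : MvPolynomial σ K} (hp : p ≠ 0) :
    ∃ (c : K) (g : MvPolynomial σ O) (m : σ →₀ ℕ), map O.subtype g = c • p ∧ coeff m g = 1 := by
  classical
  obtain ⟨m, hm, hdiv⟩ := O.exists_forall_div_mem hO p.support (c := fun m => coeff m p)
    (fun _ => notMem_support_iff.mp) (fun h => hp (MvPolynomial.ext _ _ (congrFun h)))
  have hlift : (coeff m p)⁻¹ • p ∈ Set.range (map O.subtype) := by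
    refine mem_range_map_iff_coeffs_subset.mpr fun a ha => ?_
    obtain ⟨j, -, rfl⟩ := mem_coeffs_iff.mp ha
    simpa [coeff_smul, div_eq_inv_mul] using hdiv j
  obtain ⟨g, hg⟩ := hlift
  refine ⟨_, g, m, hg, Subtype.coe_injective ?_⟩
  change O.subtype (coeff m g) = O.subtype 1
  rw [← coeff_map, hg, coeff_smul, smul_eq_mul, inv_mul_cancel₀ hm, map_one]

variable {O} in
theorem LinearIndependent.of_map_residue (hO : ∀ x : K, x ∈ O ∨ x⁻¹ ∈ O) {ι : Type*}
    [Fintype ι] {g : ι → MvPolynomial σ O}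
    (hg : LinearIndependent Δ fun i => MvPolynomial.map π (g i)) :
    LinearIndependent K fun i => MvPolynomial.map O.subtype (g i) := by
  rw [Fintype.linearIndependent_iff] at hg ⊢
  intro c hc
  by_contra! hne
  obtain ⟨i, hi, hdiv⟩ := O.exists_forall_div_mem hO Finset.univ (by simp) (Function.ne_iff.mpr hne)
  let d : ι → O := fun j => ⟨c j / c i, hdiv j⟩
  have hd : ∑ j, d j • g j = 0 := by
    apply map_injective O.subtype Subtype.coe_injective
    rw [map_sum, map_zero, ← smul_zero (c i)⁻¹, ← hc, Finset.smul_sum]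
    refine Finset.sum_congr rfl fun j _ => ?_
    rw [smul_eq_C_mul, map_mul, map_C, smul_smul, ← smul_eq_C_mul, inv_mul_eq_div]
    rfl
  have hdi : d i = 1 := Subtype.ext (div_self hi)
  have := hg (fun j => π (d j)) (by simpa [smul_eq_C_mul] using congrArg (MvPolynomial.map π) hd) i
  rw [hdi, map_one] at this
  exact one_ne_zero this

theorem exists_linearIndependent_map_residue (hO : ∀ x : K, x ∈ O ∨ x⁻¹ ∈ O)
    (W : Submodule K (MvPolynomial σ K)) [FiniteDimensional K W] :
    ∃ g : Fin (finrank K W) → MvPolynomial σ O, (∀ i, MvPolynomial.map O.subtype (g i) ∈ W) ∧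
      LinearIndependent Δ fun i => MvPolynomial.map π (g i) := by
  induction hr : finrank K W generalizing W with
  | zero => exact ⟨Fin.elim0, fun i => i.elim0, linearIndependent_empty_type⟩
  | succ r ih =>
    obtain ⟨p, hpW, hp⟩ :=
      Submodule.exists_mem_ne_zero_of_ne_bot (p := W) (by rintro rfl; simp at hr)
    obtain ⟨c, u, m, hu, hum⟩ := exists_map_subtype_eq_smul_of_mem_or_inv_mem O hO hp
    have huW : MvPolynomial.map O.subtype u ∈ W := hu ▸ W.smul_mem c hpW
    have hum' : coeff m (MvPolynomial.map O.subtype u) = 1 := by rw [coeff_map, hum, map_one]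
    let f : Module.Dual K W := (lcoeff K m).comp W.subtype
    have hf : f ≠ 0 := fun h => by simpa [f, hum'] using LinearMap.congr_fun h ⟨_, huW⟩
    let W' := (LinearMap.ker f).map W.subtype
    have hW' : finrank K W' = r := by
      rw [Submodule.finrank_map_subtype_eq]
      have := f.finrank_ker_add_one_of_ne_zero hf
      omega
    obtain ⟨g, hgW', hg⟩ := ih W' hW'
    have hgm : ∀ i, coeff m (g i) = 0 := fun i => by
      obtain ⟨y, hy, hyg⟩ := Submodule.mem_map.mp (hgW' i)
      apply Subtype.coe_injective
      change O.subtype (coeff m (g i)) = 0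
      rw [← coeff_map, ← hyg]
      exact hy
    refine ⟨Fin.cons u g, Fin.cases huW fun i => Submodule.map_subtype_le _ _ (hgW' i), ?_⟩
    change LinearIndependent Δ (MvPolynomial.map π ∘ Fin.cons u g)
    rw [Fin.comp_cons, linearIndependent_finCons]
    refine ⟨hg, fun hmem => ?_⟩
    have hspan :
        Submodule.span Δ (Set.range (MvPolynomial.map π ∘ g)) ≤ LinearMap.ker (lcoeff Δ m) :=
      Submodule.span_le.mpr (Set.range_subset_iff.mpr fun i => by simp [coeff_map, hgm i])
    simpa [coeff_map, hum] using hspan hmem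

theorem finrank_eq_of_coe_eq_image_preimage (hO : ∀ x : K, x ∈ O ∨ x⁻¹ ∈ O)
    (W : Submodule K (MvPolynomial σ K)) [FiniteDimensional K W]
    (Wbar : Submodule Δ (MvPolynomial σ Δ))
    (hWbar : (Wbar : Set (MvPolynomial σ Δ)) =
      MvPolynomial.map π '' (MvPolynomial.map O.subtype ⁻¹' W)) :
    finrank Δ Wbar = finrank K W := by
  apply finrank_eq_of_rank_eq
  apply le_antisymm
  · refine rank_le fun s hs => ?_
    have hlift (q : s) : ∃ g, MvPolynomial.map O.subtype g ∈ W ∧ MvPolynomial.map π g = q := by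
      have hq := (q : Wbar).2
      rwa [← SetLike.mem_coe, hWbar] at hq
    choose g hgW hgq using hlift
    have hind : LinearIndependent K fun q => (⟨_, hgW q⟩ : W) := by
      refine .of_comp W.subtype (.of_map_residue π hO ?_)
      simp only [hgq]
      exact hs.map' Wbar.subtype (Submodule.ker_subtype _)
    simpa using hind.fintype_card_le_finrank
  · obtain ⟨g, hgW, hg⟩ := exists_linearIndependent_map_residue O π hO W
    have hgWbar (i) : MvPolynomial.map π (g i) ∈ Wbar := by
      rw [← SetLike.mem_coe, hWbar]
      exact ⟨g i, hgW i, rfl⟩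
    have hind : LinearIndependent Δ fun i => (⟨_, hgWbar i⟩ : Wbar) := .of_comp Wbar.subtype hg
    simpa using hind.cardinal_lift_le_rank

end Reduction

theorem MvPolynomial.map_homogeneousComponent {σ R S : Type*} [CommSemiring R] [CommSemiring S]
    (f : R →+* S) (d : ℕ) (p : MvPolynomial σ R) :
    map f (homogeneousComponent d p) = homogeneousComponent d (map f p) := by
  ext m
  simp only [coeff_map, coeff_homogeneousComponent]
  split_ifs <;> simp

theorem Ideal.coe_map_of_surjective {R S : Type*} [Ring R] [Ring S] {f : R →+* S}
    (hf : Function.Surjective f) (I : Ideal R) : (I.map f : Set S) = f '' I :=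
  Set.ext fun _ => Ideal.mem_map_iff_of_surjective f hf

instance idealComponent.finiteDimensional {K : Type*} [Field K] {n : ℕ}
    (I : Ideal (MvPolynomial (Fin n) K)) (d : ℕ) : FiniteDimensional K (idealComponent I d) :=
  have : FiniteDimensional K (homogeneousSubmodule (Fin n) K d) :=
    Module.Finite.iff_fg.mpr (homogeneousSubmodule_fg (Fin n) K d)
  Submodule.finiteDimensional_of_le inf_le_left

section HomogeneousIdeal

variable {R S T : Type*} [CommRing R] [CommRing S] [CommRing T] {n : ℕ} {f : R →+* S} {g : R →+* T}
  {I : Ideal (MvPolynomial (Fin n) S)}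

theorem IsHomogeneousIdeal.map_comap (hg : Function.Surjective g) (hI : IsHomogeneousIdeal I) :
    IsHomogeneousIdeal ((I.comap (map f)).map (map g)) := by
  intro q hq d
  obtain ⟨p, hp, rfl⟩ := (Ideal.mem_map_iff_of_surjective _ (map_surjective g hg)).mp hq
  rw [← map_homogeneousComponent]
  refine Ideal.mem_map_of_mem _ ?_
  rw [Ideal.mem_comap, map_homogeneousComponent]
  exact hI _ hp d

theorem idealComponent_map_comap (hf : Function.Injective f) (hg : Function.Surjective g)
    (hI : IsHomogeneousIdeal I) (d : ℕ) :
    (idealComponent ((I.comap (map f)).map (map g)) d : Set (MvPolynomial (Fin n) T)) =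
      map g '' (map f ⁻¹' idealComponent I d) := by
  ext q
  simp only [idealComponent, SetLike.mem_coe, Set.mem_image, Set.mem_preimage, Submodule.mem_inf,
    Submodule.restrictScalars_mem, mem_homogeneousSubmodule]
  constructor
  · rintro ⟨hqd, hq⟩
    obtain ⟨p, hp, rfl⟩ := (Ideal.mem_map_iff_of_surjective _ (map_surjective g hg)).mp hq
    refine ⟨homogeneousComponent d p, ⟨?_, ?_⟩, ?_⟩
    · rw [map_homogeneousComponent]
      exact homogeneousComponent_isHomogeneous _ _
    · rw [map_homogeneousComponent]
      exact hI _ hp d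
    · rw [map_homogeneousComponent, homogeneousComponent_eq_self hqd]
  · rintro ⟨p, ⟨hpd, hp⟩, rfl⟩
    exact ⟨(hpd.of_map hf).map g, Ideal.mem_map_of_mem _ hp⟩

end HomogeneousIdeal

theorem IsRealValuation.v_inv {K : Type*} [Field K] {v : K → ℝ} (hv : IsRealValuation v)
    {x : K} (hx : x ≠ 0) : v x⁻¹ = -v x := by
  have h := hv.1 x x⁻¹ hx (inv_ne_zero hx)
  rw [mul_inv_cancel₀ hx, hv.v_one] at h
  linarith

theorem valuationSubring_mem_or_inv_mem {K : Type*} [Field K] {v : K → ℝ}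
    (hv : IsRealValuation v) (x : K) :
    x ∈ valuationSubring v hv ∨ x⁻¹ ∈ valuationSubring v hv := by
  rcases eq_or_ne x 0 with rfl | hx
  · exact Or.inl (Or.inl rfl)
  rcases le_total 0 (v x) with h | h
  · exact Or.inl (Or.inr h)
  · exact Or.inr (Or.inr (by rw [hv.v_inv hx]; linarith))

instance valuationMaxIdeal_isMaximal {K : Type*} [Field K] {v : K → ℝ} (hv : IsRealValuation v) :
    (valuationMaxIdeal v hv).IsMaximal := by
  refine Ideal.isMaximal_iff.mpr ⟨fun h => ?_, fun J x _ hx hxJ => ?_⟩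
  · have h' : (1 : K) = 0 ∨ 0 < v 1 := h
    simp [hv.v_one] at h'
  · have hx' : ¬((x : K) = 0 ∨ 0 < v x) := hx
    push Not at hx'
    obtain ⟨hx0, hxv⟩ := hx'
    have hinv : (x : K)⁻¹ ∈ valuationSubring v hv :=
      Or.inr (by rw [hv.v_inv hx0]; linarith [x.2.resolve_left hx0])
    have hunit : (⟨_, hinv⟩ * x : valuationSubring v hv) = 1 := Subtype.ext (inv_mul_cancel₀ hx0)
    exact hunit ▸ J.mul_mem_left _ hxJ

theorem reducedIdeal_isHomogeneous_and_same_hilbert_function_general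
    {K : Type*} [Field K] (v : K → ℝ) (hv : IsRealValuation v)
    {n : ℕ} (I : Ideal (MvPolynomial (Fin (n + 1)) K)) (hIhom : IsHomogeneousIdeal I) :
    ∃ Ibar : Ideal (MvPolynomial (Fin (n + 1)) (residueField v hv)),
      (Ibar : Set (MvPolynomial (Fin (n + 1)) (residueField v hv))) =
        reducedIdealSet v hv I ∧
      IsHomogeneousIdeal Ibar ∧
      ∀ d : ℕ, Module.finrank (residueField v hv) (idealComponent Ibar d) =
        Module.finrank K (idealComponent I d) := by
  let π := Ideal.Quotient.mk (valuationMaxIdeal v hv)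
  have hπ : Function.Surjective π := Ideal.Quotient.mk_surjective
  let := Ideal.Quotient.field (valuationMaxIdeal v hv)
  refine ⟨(I.comap (map (valuationSubring v hv).subtype)).map (map π),
    Ideal.coe_map_of_surjective (map_surjective π hπ) _, hIhom.map_comap hπ, fun d => ?_⟩
  exact finrank_eq_of_coe_eq_image_preimage _ π (valuationSubring_mem_or_inv_mem hv) _ _
    (idealComponent_map_comap Subtype.coe_injective hπ hIhom d)

set_option synthInstance.maxHeartbeats 1000000 in
set_option maxHeartbeats 1000000 in
/-- For a homogeneous ideal `I ⊆ K[x_0,…,x_n]`, the reduction `Ī` is a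
homogeneous ideal of `Δ[x_0,…,x_n]` with the same Hilbert function as `I`, i.e.
`dim_Δ (Ī_d) = dim_K (I_d)` for every `d`. -/
theorem reducedIdeal_isHomogeneous_and_same_hilbert_function
    {K : Type*} [Field K] [IsAlgClosed K] (v : K → ℝ) (hv : IsRealValuation v)
    {n : ℕ} (I : Ideal (MvPolynomial (Fin (n + 1)) K)) (hIhom : IsHomogeneousIdeal I) :
    ∃ Ibar : Ideal (MvPolynomial (Fin (n + 1)) (residueField v hv)),
      (Ibar : Set (MvPolynomial (Fin (n + 1)) (residueField v hv))) =
        reducedIdealSet v hv I ∧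
      IsHomogeneousIdeal Ibar ∧
      ∀ d : ℕ, Module.finrank (residueField v hv) (idealComponent Ibar d) =
        Module.finrank K (idealComponent I d) :=
  reducedIdeal_isHomogeneous_and_same_hilbert_function_general v hv I hIhom
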